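/- arXiv:2105.08268 — 5 statements merged into one kernel-verified Lean document; each statement's English description precedes it below -/
import Mathlib

section
/- Let Q : S^N × A^N → ℝ be the unique solution of the Bellman optimality equation Q(s,a) = r(s,a) + γ ∑_{s'} P(s'|s,a) max_{a'} Q(s',a'), where the reward r and transition kernel P are permutation invariant, i.e., r(s,a) = r(κ(s),κ(a)) and P(s'|s,a) = P(κ(s')|κ(s),κ(a)) for every permutation κ of the N coordinates. Then Q is permutation invariant: Q(s,a) = Q(κ(s),κ(a)) for all permutations κ. -/
/-!
If `κ` is a symmetry of the reward and of the transition kernel, then the Bellman optimality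
operator commutes with relabelling by `κ`, so `Q ∘ κ` is again a fixed point; by uniqueness of
the fixed point it equals `Q`.
-/

open Finset

theorem Finset.sup'_univ_comp_equiv {α β L : Type*} [Fintype α] [Fintype β] [Nonempty α]
    [Nonempty β] [ConditionallyCompleteLattice L] (e : α ≃ β) (f : β → L) :
    univ.sup' univ_nonempty (f ∘ e) = univ.sup' univ_nonempty f := by
  simp only [sup'_univ_eq_ciSup, Function.comp_apply]
  exact e.iSup_comp

section Bellman

variable {X Y : Type*} [Fintype X] [Fintype Y] [Nonempty Y]

noncomputable def bellmanOpt (γ : ℝ) (r : X → Y → ℝ) (P : X → Y → X → ℝ) (Q : X → Y → ℝ) :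
    X → Y → ℝ :=
  fun x y => r x y + γ * ∑ x', P x y x' * univ.sup' univ_nonempty (Q x')

theorem bellmanOpt_comp_equiv (γ : ℝ) {r : X → Y → ℝ} {P : X → Y → X → ℝ} (e : X ≃ X)
    (f : Y ≃ Y) (hr : ∀ x y, r (e x) (f y) = r x y)
    (hP : ∀ x y x', P (e x) (f y) (e x') = P x y x') (Q : X → Y → ℝ) :
    bellmanOpt γ r P (fun x y => Q (e x) (f y)) = fun x y => bellmanOpt γ r P Q (e x) (f y) := by
  funext x y
  simp only [bellmanOpt, hr]
  rw [← e.sum_comp (fun x' => P (e x) (f y) x' * _)]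
  simp only [hP]
  congr 2
  refine sum_congr rfl fun x' _ => ?_
  exact congrArg _ (sup'_univ_comp_equiv f (Q (e x')))

theorem bellmanOpt_fixedPt_comp_equiv_eq (γ : ℝ) {r : X → Y → ℝ} {P : X → Y → X → ℝ}
    (e : X ≃ X) (f : Y ≃ Y) (hr : ∀ x y, r (e x) (f y) = r x y)
    (hP : ∀ x y x', P (e x) (f y) (e x') = P x y x') {Q : X → Y → ℝ}
    (hQ : Function.IsFixedPt (bellmanOpt γ r P) Q)
    (hUnique : ∀ Q', Function.IsFixedPt (bellmanOpt γ r P) Q' → Q' = Q) :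
    (fun x y => Q (e x) (f y)) = Q :=
  hUnique _ <| by rw [Function.IsFixedPt, bellmanOpt_comp_equiv γ e f hr hP, hQ.eq]

end Bellman

theorem stmt_0_general {S A : Type*} [Fintype S] [Fintype A] [Nonempty A] {N : ℕ}
    (γ : ℝ)
    (r : (Fin N → S) → (Fin N → A) → ℝ)
    (P : (Fin N → S) → (Fin N → A) → (Fin N → S) → ℝ)
    (hr : ∀ (κ : Equiv.Perm (Fin N)) (s : Fin N → S) (a : Fin N → A),
      r s a = r (s ∘ κ) (a ∘ κ))
    (hP : ∀ (κ : Equiv.Perm (Fin N)) (s : Fin N → S) (a : Fin N → A) (s' : Fin N → S),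
      P s a s' = P (s ∘ κ) (a ∘ κ) (s' ∘ κ))
    (Q : (Fin N → S) → (Fin N → A) → ℝ)
    (hQ : ∀ s a, Q s a = r s a + γ * ∑ s' : Fin N → S, P s a s' *
      Finset.univ.sup' Finset.univ_nonempty (fun a' : Fin N → A => Q s' a'))
    (hUnique : ∀ Q' : (Fin N → S) → (Fin N → A) → ℝ,
      (∀ s a, Q' s a = r s a + γ * ∑ s' : Fin N → S, P s a s' *
        Finset.univ.sup' Finset.univ_nonempty (fun a' : Fin N → A => Q' s' a')) → Q' = Q) :
    ∀ (κ : Equiv.Perm (Fin N)) (s : Fin N → S) (a : Fin N → A),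
      Q s a = Q (s ∘ κ) (a ∘ κ) := by
  intro κ s a
  have hfix : Function.IsFixedPt (bellmanOpt γ r P) Q := funext₂ fun s a => (hQ s a).symm
  have hperm := bellmanOpt_fixedPt_comp_equiv_eq γ (κ.symm.arrowCongr (.refl S))
    (κ.symm.arrowCongr (.refl A)) (fun s a => (hr κ s a).symm)
    (fun s a s' => (hP κ s a s').symm) hfix
    fun Q' hQ' => hUnique Q' fun s a => (congrFun₂ hQ' s a).symm
  exact (congrFun₂ hperm s a).symm

/-- The unique solution of the Bellman optimality equation of a permutation-invariant
MDP is permutation invariant. -/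
theorem stmt_0 {S A : Type*} [Fintype S] [Fintype A] [Nonempty S] [Nonempty A] {N : ℕ}
    (γ : ℝ) (hγ0 : 0 ≤ γ) (hγ1 : γ < 1)
    (r : (Fin N → S) → (Fin N → A) → ℝ)
    (P : (Fin N → S) → (Fin N → A) → (Fin N → S) → ℝ)
    (hr : ∀ (κ : Equiv.Perm (Fin N)) (s : Fin N → S) (a : Fin N → A),
      r s a = r (s ∘ κ) (a ∘ κ))
    (hP : ∀ (κ : Equiv.Perm (Fin N)) (s : Fin N → S) (a : Fin N → A) (s' : Fin N → S),
      P s a s' = P (s ∘ κ) (a ∘ κ) (s' ∘ κ))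
    (Q : (Fin N → S) → (Fin N → A) → ℝ)
    (hQ : ∀ s a, Q s a = r s a + γ * ∑ s' : Fin N → S, P s a s' *
      Finset.univ.sup' Finset.univ_nonempty (fun a' : Fin N → A => Q s' a'))
    (hUnique : ∀ Q' : (Fin N → S) → (Fin N → A) → ℝ,
      (∀ s a, Q' s a = r s a + γ * ∑ s' : Fin N → S, P s a s' *
        Finset.univ.sup' Finset.univ_nonempty (fun a' : Fin N → A => Q' s' a')) → Q' = Q) :
    ∀ (κ : Equiv.Perm (Fin N)) (s : Fin N → S) (a : Fin N → A),
      Q s a = Q (s ∘ κ) (a ∘ κ) :=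
  stmt_0_general γ r P hr hP Q hQ hUnique
end

section
/- Let A be a finite set, let Q : A → ℝ with ‖Q‖_∞ ≤ r̄, let π, π' be probability distributions on A, and let υ > 0. Then ⟨Q, π' − π⟩ − υ · KL(π' ‖ π) ≤ r̄²/(2υ). -/
/-!
Bound the linear term by `r̄ ‖π' - π‖₁` and the divergence from below by Pinsker's inequality
`‖π' - π‖₁² ≤ 2 KL(π' ‖ π)`; what remains is the quadratic `r̄ x - υ x² / 2 ≤ r̄² / (2υ)`.
Pinsker's inequality itself follows from the scalar bound `3 (t - 1)² ≤ (2t + 4) klFun t`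
and a weighted Cauchy–Schwarz inequality with weights `(2π' + 4π) / 3`, which sum to `2`.
-/

open Set InformationTheory

lemma isMinOn_Ici_of_hasDerivAt {f f' : ℝ → ℝ} {a c : ℝ} (hac : a ≤ c)
    (hf : ContinuousOn f (Ici a)) (hf' : ∀ x ∈ Ioi a, HasDerivAt f (f' x) x)
    (hf'_nonpos : ∀ x ∈ Ioo a c, f' x ≤ 0) (hf'_nonneg : ∀ x ∈ Ioi c, 0 ≤ f' x) :
    IsMinOn f (Ici a) c := by
  intro x (hx : a ≤ x)
  rcases le_total x c with hxc | hcx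
  · refine antitoneOn_of_hasDerivWithinAt_nonpos (convex_Icc a c) (hf.mono Icc_subset_Ici_self)
      (fun y hy => ?_) (by simpa only [interior_Icc] using hf'_nonpos) ⟨hx, hxc⟩ ⟨hac, le_rfl⟩ hxc
    rw [interior_Icc] at hy ⊢
    exact (hf' y hy.1).hasDerivWithinAt
  · refine monotoneOn_of_hasDerivWithinAt_nonneg (convex_Ici c)
      (hf.mono (Ici_subset_Ici.2 hac)) (fun y hy => ?_)
      (by simpa only [interior_Ici] using hf'_nonneg)
      self_mem_Ici hcx hcx
    rw [interior_Ici] at hy ⊢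
    exact (hf' y (hac.trans_lt hy)).hasDerivWithinAt

lemma monotoneOn_add_one_mul_log_sub :
    MonotoneOn (fun t => (t + 1) * Real.log t - 2 * (t - 1)) (Ioi 0) := by
  have hderiv : ∀ t ∈ Ioi (0 : ℝ), HasDerivAt (fun t => (t + 1) * Real.log t - 2 * (t - 1))
      (Real.log t + t⁻¹ - 1) t := fun t (ht : 0 < t) => by
    refine ((((hasDerivAt_id t).add_const 1).mul (Real.hasDerivAt_log ht.ne')).sub
      (((hasDerivAt_id t).sub_const 1).const_mul 2)).congr_deriv ?_
    simp only [id]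
    field_simp
    ring
  refine monotoneOn_of_hasDerivWithinAt_nonneg (f' := fun t => Real.log t + t⁻¹ - 1) (convex_Ioi 0)
    (fun t ht => (hderiv t ht).continuousAt.continuousWithinAt)
    (fun t ht => ?_) (fun t ht => ?_) <;> rw [interior_Ioi] at *
  · exact (hderiv t ht).hasDerivWithinAt
  · linarith [Real.one_sub_inv_le_log_of_pos ht]

lemma three_mul_sq_sub_one_le_mul_klFun {t : ℝ} (ht : 0 ≤ t) :
    3 * (t - 1) ^ 2 ≤ (2 * t + 4) * klFun t := by
  set g : ℝ → ℝ := fun t => (t + 1) * Real.log t - 2 * (t - 1)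
  have hg1 : g 1 = 0 := by simp [g]
  have hmin : IsMinOn (fun t => (2 * t + 4) * klFun t - 3 * (t - 1) ^ 2) (Ici 0) 1 := by
    refine isMinOn_Ici_of_hasDerivAt (f' := fun t => 4 * g t) zero_le_one (by fun_prop)
      (fun x (hx : 0 < x) => ?_) (fun x hx => ?_) (fun x hx => ?_)
    · refine ((((hasDerivAt_id x).const_mul 2).add_const 4).mul (hasDerivAt_klFun hx.ne') |>.sub
        (((hasDerivAt_id x).sub_const 1).pow 2 |>.const_mul 3)).congr_deriv ?_
      simp only [g, klFun_apply, id]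
      ring
    · have := monotoneOn_add_one_mul_log_sub hx.1 (mem_Ioi.2 one_pos) hx.2.le
      linarith
    · have := monotoneOn_add_one_mul_log_sub (mem_Ioi.2 one_pos)
        (mem_Ioi.2 (one_pos.trans hx)) hx.le
      linarith
  have : (2 * 1 + 4) * klFun 1 - 3 * (1 - 1) ^ 2 ≤ (2 * t + 4) * klFun t - 3 * (t - 1) ^ 2 :=
    hmin (mem_Ici.2 ht)
  rw [klFun_one] at this
  linarith

lemma three_mul_sq_sub_le_mul_klFun_div {p q : ℝ} (hp : 0 ≤ p) (hq : 0 < q) :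
    3 * (p - q) ^ 2 ≤ (2 * p + 4 * q) * (q * klFun (p / q)) := by
  have hscalar := three_mul_sq_sub_one_le_mul_klFun (div_nonneg hp hq.le)
  calc 3 * (p - q) ^ 2 = 3 * (p / q - 1) ^ 2 * q ^ 2 := by field_simp
    _ ≤ (2 * (p / q) + 4) * klFun (p / q) * q ^ 2 := by gcongr
    _ = (2 * p + 4 * q) * (q * klFun (p / q)) := by field_simp

lemma mul_klFun_div {p q : ℝ} (hq : q ≠ 0) : q * klFun (p / q) = p * Real.log (p / q) + q - p := by
  rw [klFun_apply]; field_simp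

theorem sq_sum_abs_sub_le_two_mul_sum_mul_log_div {ι : Type*} [Fintype ι] {p q : ι → ℝ}
    (hp : ∀ i, 0 ≤ p i) (hq : ∀ i, 0 < q i) (hp_sum : ∑ i, p i = 1) (hq_sum : ∑ i, q i = 1) :
    (∑ i, |p i - q i|) ^ 2 ≤ 2 * ∑ i, p i * Real.log (p i / q i) := by
  set w : ι → ℝ := fun i => (2 * p i + 4 * q i) / 3
  have hw_pos : ∀ i, 0 < w i := fun i => by have := hp i; have := hq i; simp only [w]; positivity
  have hw_sum : ∑ i, w i = 2 := by
    simp only [w, ← Finset.sum_div, Finset.sum_add_distrib, ← Finset.mul_sum, hp_sum, hq_sum]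
    norm_num
  have hkl : ∑ i, q i * klFun (p i / q i) = ∑ i, p i * Real.log (p i / q i) := by
    simp only [mul_klFun_div (hq _).ne', Finset.sum_sub_distrib, Finset.sum_add_distrib, hp_sum,
      hq_sum, add_sub_cancel_right]
  have hsedrakyan :=
    Finset.sq_sum_div_le_sum_sq_div Finset.univ (fun i => |p i - q i|) fun i _ => hw_pos i
  rw [hw_sum, div_le_iff₀ two_pos] at hsedrakyan
  refine hsedrakyan.trans ?_
  rw [mul_comm, ← hkl]
  gcongr with i
  rw [sq_abs, div_le_iff₀ (hw_pos i)]
  have := three_mul_sq_sub_le_mul_klFun_div (hp i) (hq i)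
  simp only [w]
  linarith

lemma sum_mul_le_mul_sum_abs {ι : Type*} [Fintype ι] {Q d : ι → ℝ} {r : ℝ} (hQ : ∀ i, |Q i| ≤ r) :
    ∑ i, Q i * d i ≤ r * ∑ i, |d i| := by
  rw [Finset.mul_sum]
  refine Finset.sum_le_sum fun i _ => ?_
  calc Q i * d i ≤ |Q i| * |d i| := by rw [← abs_mul]; exact le_abs_self _
    _ ≤ r * |d i| := by gcongr; exact hQ i

lemma mul_sub_mul_sq_div_two_le_sq_div (b x : ℝ) {υ : ℝ} (hυ : 0 < υ) :
    b * x - υ * (x ^ 2 / 2) ≤ b ^ 2 / (2 * υ) := by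
  rw [le_div_iff₀ (by positivity)]
  nlinarith [sq_nonneg (b - υ * x)]

theorem stmt_7_general {A : Type*} [Fintype A]
    (Q : A → ℝ) (rbar : ℝ) (hQ : ∀ a, |Q a| ≤ rbar)
    (π π' : A → ℝ)
    (hπpos : ∀ a, 0 < π a) (hπsum : ∑ a, π a = 1)
    (hπ'nonneg : ∀ a, 0 ≤ π' a) (hπ'sum : ∑ a, π' a = 1)
    (υ : ℝ) (hυ : 0 < υ) :
    (∑ a, Q a * (π' a - π a)) - υ * ∑ a, π' a * Real.log (π' a / π a)
      ≤ rbar ^ 2 / (2 * υ) := by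
  set x := ∑ a, |π' a - π a|
  have hlin : ∑ a, Q a * (π' a - π a) ≤ rbar * x := sum_mul_le_mul_sum_abs hQ
  have hpinsker : x ^ 2 ≤ 2 * ∑ a, π' a * Real.log (π' a / π a) :=
    sq_sum_abs_sub_le_two_mul_sum_mul_log_div hπ'nonneg hπpos hπ'sum hπsum
  calc _ ≤ rbar * x - υ * (x ^ 2 / 2) := by gcongr; linarith
    _ ≤ rbar ^ 2 / (2 * υ) := mul_sub_mul_sq_div_two_le_sq_div rbar x hυ

/-- Pinsker-based bound: `⟨Q, π' − π⟩ − υ KL(π'‖π) ≤ r̄²/(2υ)`. -/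
theorem stmt_7 {A : Type*} [Fintype A] [Nonempty A]
    (Q : A → ℝ) (rbar : ℝ) (hQ : ∀ a, |Q a| ≤ rbar)
    (π π' : A → ℝ)
    (hπpos : ∀ a, 0 < π a) (hπsum : ∑ a, π a = 1)
    (hπ'nonneg : ∀ a, 0 ≤ π' a) (hπ'sum : ∑ a, π' a = 1)
    (υ : ℝ) (hυ : 0 < υ) :
    (∑ a, Q a * (π' a - π a)) - υ * ∑ a, π' a * Real.log (π' a / π a)
      ≤ rbar ^ 2 / (2 * υ) :=
  stmt_7_general Q rbar hQ π π' hπpos hπsum hπ'nonneg hπ'sum υ hυ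
end

section
/- Three-point lemma for KL-regularized maximization: let A be a finite set, q : A → ℝ, υ > 0, π_k a full-support distribution on A, and let π_{k+1} be the maximizer of ⟨q, π⟩ − υ KL(π ‖ π_k) over distributions π. Then for every distribution π* on A, ⟨q, π* − π_k⟩ ≤ υ [ KL(π* ‖ π_k) − KL(π* ‖ π_{k+1}) − KL(π_{k+1} ‖ π_k) ] + ⟨q, π_{k+1} − π_k⟩. -/
/-!
The maximizer is forced to be the Gibbs tilt `σ = π_k exp (q / υ) / Z`: for every distribution `π`,
`⟨q, π⟩ - υ KL(π ‖ π_k) = υ log Z - υ KL(π ‖ σ)`, so maximality gives `KL(π_{k+1} ‖ σ) ≤ 0`, and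
Gibbs' inequality with its equality case gives `π_{k+1} = σ`. Evaluating the same identity at `π*`
and at `σ` and subtracting turns the claim into an equality.
-/

namespace KLThreePoint

open Real InformationTheory

variable {A : Type*} [Fintype A]

noncomputable def discreteKL (p r : A → ℝ) : ℝ := ∑ a, p a * log (p a / r a)

noncomputable def tilt (r f : A → ℝ) (a : A) : ℝ := r a * exp (f a) / ∑ b, r b * exp (f b)

lemma discreteKL_self (p : A → ℝ) : discreteKL p p = 0 :=
  Finset.sum_eq_zero fun a _ => by by_cases h : p a = 0 <;> simp [h]

lemma discreteKL_eq_sum_klFun {p r : A → ℝ} (hr : ∀ a, 0 < r a) (hsum : ∑ a, p a = ∑ a, r a) :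
    discreteKL p r = ∑ a, r a * klFun (p a / r a) := by
  have hterm : ∀ a, r a * klFun (p a / r a) = p a * log (p a / r a) + (r a - p a) := fun a => by
    rw [klFun_apply]
    field_simp [(hr a).ne']
    ring
  simp only [hterm, Finset.sum_add_distrib, Finset.sum_sub_distrib, hsum, sub_self, add_zero]
  rfl

lemma eq_of_discreteKL_nonpos {p r : A → ℝ} (hp : ∀ a, 0 ≤ p a) (hr : ∀ a, 0 < r a)
    (hsum : ∑ a, p a = ∑ a, r a) (hkl : discreteKL p r ≤ 0) : p = r := by
  have hnonneg : ∀ a ∈ Finset.univ, 0 ≤ r a * klFun (p a / r a) := fun a _ =>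
    mul_nonneg (hr a).le (klFun_nonneg (div_nonneg (hp a) (hr a).le))
  rw [discreteKL_eq_sum_klFun hr hsum] at hkl
  have hzero := (Finset.sum_eq_zero_iff_of_nonneg hnonneg).1
    (le_antisymm hkl (Finset.sum_nonneg hnonneg))
  funext a
  have hklFun : klFun (p a / r a) = 0 :=
    (mul_eq_zero.1 (hzero a (Finset.mem_univ a))).resolve_left (hr a).ne'
  rw [klFun_eq_zero_iff (div_nonneg (hp a) (hr a).le), div_eq_one_iff_eq (hr a).ne'] at hklFun
  exact hklFun

section Tilt

variable [Nonempty A] {r : A → ℝ} (hr : ∀ a, 0 < r a) (f : A → ℝ)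
include hr

lemma sum_mul_exp_pos : 0 < ∑ b, r b * exp (f b) :=
  Finset.sum_pos (fun b _ => mul_pos (hr b) (exp_pos _)) Finset.univ_nonempty

lemma tilt_pos (a : A) : 0 < tilt r f a :=
  div_pos (mul_pos (hr a) (exp_pos _)) (sum_mul_exp_pos hr f)

lemma sum_tilt : ∑ a, tilt r f a = 1 := by
  simp only [tilt, ← Finset.sum_div, div_self (sum_mul_exp_pos hr f).ne']

lemma log_tilt_div (a : A) : log (tilt r f a / r a) = f a - log (∑ b, r b * exp (f b)) := by
  have hdiv : tilt r f a / r a = exp (f a) / ∑ b, r b * exp (f b) := by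
    rw [tilt]
    field_simp [(hr a).ne']
  rw [hdiv, log_div (exp_pos _).ne' (sum_mul_exp_pos hr f).ne', log_exp]

lemma discreteKL_tilt {p : A → ℝ} (hp : ∑ a, p a = 1) :
    discreteKL p (tilt r f) = discreteKL p r - ∑ a, f a * p a + log (∑ b, r b * exp (f b)) := by
  have hterm : ∀ a, p a * log (p a / tilt r f a)
      = p a * log (p a / r a) - f a * p a + p a * log (∑ b, r b * exp (f b)) := fun a => by
    by_cases h0 : p a = 0
    · simp [h0]
    rw [← div_div_div_cancel_right₀ (hr a).ne', log_div (div_ne_zero h0 (hr a).ne')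
      (div_pos (tilt_pos hr f a) (hr a)).ne', log_tilt_div hr]
    ring
  simp only [discreteKL, hterm, Finset.sum_add_distrib, Finset.sum_sub_distrib, ← Finset.sum_mul, hp,
    one_mul]

lemma eq_tilt_of_maximizes {p : A → ℝ} (hp : ∀ a, 0 ≤ p a) (hpsum : ∑ a, p a = 1)
    (hmax : ∑ a, f a * tilt r f a - discreteKL (tilt r f) r ≤ ∑ a, f a * p a - discreteKL p r) :
    p = tilt r f := by
  refine eq_of_discreteKL_nonpos hp (tilt_pos hr f) (by rw [hpsum, sum_tilt hr]) ?_
  have hσ := discreteKL_tilt hr f (sum_tilt hr f)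
  have hp' := discreteKL_tilt hr f hpsum
  rw [discreteKL_self] at hσ
  linarith

lemma three_point_tilt {p : A → ℝ} (hp : ∑ a, p a = 1) :
    ∑ a, f a * (p a - tilt r f a) = discreteKL p r - discreteKL p (tilt r f) - discreteKL (tilt r f) r := by
  have hσ := discreteKL_tilt hr f (sum_tilt hr f)
  have hp' := discreteKL_tilt hr f hp
  rw [discreteKL_self] at hσ
  simp only [mul_sub, Finset.sum_sub_distrib]
  linarith

end Tilt

end KLThreePoint

open KLThreePoint in
theorem stmt_8_general {A : Type*} [Fintype A] [Nonempty A]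
    (q : A → ℝ) (υ : ℝ) (hυ : 0 < υ)
    (πk : A → ℝ) (hπkpos : ∀ a, 0 < πk a)
    (KL : (A → ℝ) → (A → ℝ) → ℝ)
    (hKL : ∀ p r : A → ℝ, KL p r = ∑ a, p a * Real.log (p a / r a))
    (J : (A → ℝ) → ℝ)
    (hJ : ∀ π : A → ℝ, J π = (∑ a, q a * π a) - υ * KL π πk)
    (πk1 : A → ℝ) (hpos : ∀ a, 0 ≤ πk1 a) (hsum : ∑ a, πk1 a = 1)
    (hmax : ∀ π : A → ℝ, (∀ a, 0 ≤ π a) → (∑ a, π a = 1) → J π ≤ J πk1) :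
    ∀ πstar : A → ℝ, (∀ a, 0 ≤ πstar a) → (∑ a, πstar a = 1) →
      ∑ a, q a * (πstar a - πk a)
        ≤ υ * (KL πstar πk - KL πstar πk1 - KL πk1 πk)
          + ∑ a, q a * (πk1 a - πk a) := by
  intro πstar _ hstarsum
  obtain rfl : KL = discreteKL := funext₂ hKL
  set f : A → ℝ := fun a => q a / υ
  have hq : ∀ p : A → ℝ, ∑ a, q a * p a = υ * ∑ a, f a * p a := fun p => by
    simp only [f, Finset.mul_sum]
    exact Finset.sum_congr rfl fun a _ => by field_simp
  have hk1 : πk1 = tilt πk f := by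
    refine eq_tilt_of_maximizes hπkpos f hpos hsum ?_
    have h := hmax _ (fun a => (tilt_pos hπkpos f a).le) (sum_tilt hπkpos f)
    rw [hJ, hJ, hq, hq, ← mul_sub, ← mul_sub] at h
    exact le_of_mul_le_mul_left h hυ
  subst hk1
  refine le_of_eq ?_
  calc ∑ a, q a * (πstar a - πk a)
      = ∑ a, q a * (πstar a - tilt πk f a) + ∑ a, q a * (tilt πk f a - πk a) := by
        rw [← Finset.sum_add_distrib]
        simp only [← mul_add, sub_add_sub_cancel]
    _ = _ := by rw [← three_point_tilt hπkpos f hstarsum, hq]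

/-- Three-point lemma for KL-regularized maximization over the simplex. -/
theorem stmt_8 {A : Type*} [Fintype A] [Nonempty A]
    (q : A → ℝ) (υ : ℝ) (hυ : 0 < υ)
    (πk : A → ℝ) (hπkpos : ∀ a, 0 < πk a) (hπksum : ∑ a, πk a = 1)
    (KL : (A → ℝ) → (A → ℝ) → ℝ)
    (hKL : ∀ p r : A → ℝ, KL p r = ∑ a, p a * Real.log (p a / r a))
    (J : (A → ℝ) → ℝ)
    (hJ : ∀ π : A → ℝ, J π = (∑ a, q a * π a) - υ * KL π πk)
    (πk1 : A → ℝ) (hpos : ∀ a, 0 ≤ πk1 a) (hsum : ∑ a, πk1 a = 1)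
    (hmax : ∀ π : A → ℝ, (∀ a, 0 ≤ π a) → (∑ a, π a = 1) → J π ≤ J πk1) :
    ∀ πstar : A → ℝ, (∀ a, 0 ≤ πstar a) → (∑ a, πstar a = 1) →
      ∑ a, q a * (πstar a - πk a)
        ≤ υ * (KL πstar πk - KL πstar πk1 - KL πk1 πk)
          + ∑ a, q a * (πk1 a - πk a) :=
  stmt_8_general q υ hυ πk hπkpos KL hKL J hJ πk1 hpos hsum hmax
end

section
/- Performance difference identity: for any two policies π, π' of a discounted MDP with discount γ ∈ [0,1), state space S and finite action space A, E_{s ∼ ν^{π'}} ⟨Q^π(s, ·), π'(·|s) − π(·|s)⟩ = (1−γ)(L(π') − L(π)), where ν^{π'} is the (discounted) stationary state distribution of π', Q^π is the state-action value function of π, and L(π) = E_{s ∼ ν^{π'}} V^π(s). -/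
/-!
Averaged against a stationary distribution `ν` of `π'`, a one-step Bellman backup under `π'`
of any `W` gives `(1 - γ) R + γ ∑ ν W`, with `R` the `ν`-averaged reward of `π'`. Applied to
`W = V^π` this evaluates `∑ ν ⟨Q^π, π'⟩`, and applied to `W = V^{π'}` it gives
`∑ ν V^{π'} = (1 - γ) R + γ ∑ ν V^{π'}`; subtracting the two yields the identity.
-/

open Finset

section

variable {S A : Type*} [Fintype S] [Fintype A]

theorem sum_mul_expected_next_of_stationary {P : S → A → S → ℝ} {π : S → A → ℝ} {ν : S → ℝ}
    (hstat : ∀ s', ν s' = ∑ s, ∑ a, ν s * π s a * P s a s') (f : S → ℝ) :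
    ∑ s, ν s * ∑ a, π s a * ∑ s', P s a s' * f s' = ∑ s', ν s' * f s' := by
  conv_rhs => rw [funext hstat]
  simp_rw [sum_mul, mul_sum, ← mul_assoc]
  exact (sum_congr rfl fun _ _ => sum_comm).trans sum_comm

theorem sum_mul_policy_bellman_of_stationary (γ : ℝ) (r : S → A → ℝ) {P : S → A → S → ℝ}
    {π : S → A → ℝ} {ν : S → ℝ} (hstat : ∀ s', ν s' = ∑ s, ∑ a, ν s * π s a * P s a s')
    (W : S → ℝ) :
    ∑ s, ν s * ∑ a, π s a * ((1 - γ) * r s a + γ * ∑ s', P s a s' * W s')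
      = (1 - γ) * ∑ s, ν s * ∑ a, π s a * r s a + γ * ∑ s, ν s * W s := by
  rw [← sum_mul_expected_next_of_stationary hstat W]
  simp only [mul_add, sum_add_distrib, mul_sum, mul_left_comm _ γ, mul_left_comm _ (1 - γ)]

end

theorem stmt_10_general {S A : Type*} [Fintype S] [Fintype A]
    (γ : ℝ)
    (r : S → A → ℝ)
    (P : S → A → S → ℝ)
    (π π' : S → A → ℝ)
    -- value and Q functions of π (with the (1−γ)-scaled reward convention)
    (V : S → ℝ) (Q : S → A → ℝ) (hV : ∀ s : S, V s = ∑ a, π s a * Q s a)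
    (hQ : ∀ (s : S) (a : A), Q s a = (1 - γ) * r s a + γ * ∑ s', P s a s' * V s')
    -- value and Q functions of π'
    (V' : S → ℝ) (Q' : S → A → ℝ) (hV' : ∀ s : S, V' s = ∑ a, π' s a * Q' s a)
    (hQ' : ∀ (s : S) (a : A), Q' s a = (1 - γ) * r s a + γ * ∑ s', P s a s' * V' s')
    -- stationary state distribution of π'
    (ν : S → ℝ)
    (hstat : ∀ s' : S, ν s' = ∑ s, ∑ a, ν s * π' s a * P s a s') :
    ∑ s, ν s * ∑ a, Q s a * (π' s a - π s a)
      = (1 - γ) * ((∑ s, ν s * V' s) - ∑ s, ν s * V s) := by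
  have hadv : ∑ s, ν s * ∑ a, Q s a * (π' s a - π s a)
      = ∑ s, ν s * ∑ a, π' s a * Q s a - ∑ s, ν s * V s := by
    simp only [hV, mul_comm (Q _ _), sub_mul, sum_sub_distrib, mul_sub]
  have hQ_eval : ∑ s, ν s * ∑ a, π' s a * Q s a
      = (1 - γ) * ∑ s, ν s * ∑ a, π' s a * r s a + γ * ∑ s, ν s * V s := by
    simp only [hQ]
    exact sum_mul_policy_bellman_of_stationary γ r hstat V
  have hV'_eval : ∑ s, ν s * V' s
      = (1 - γ) * ∑ s, ν s * ∑ a, π' s a * r s a + γ * ∑ s, ν s * V' s := by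
    rw [← sum_mul_policy_bellman_of_stationary γ r hstat V']
    exact sum_congr rfl fun s _ => by simp only [hV' s, hQ']
  linear_combination hadv + hQ_eval - hV'_eval

/-- Performance difference identity (Kakade–Langford): for policies `π`, `π'` of a
finite discounted MDP, `E_{s∼ν^{π'}} ⟨Q^π(s,·), π'(·|s) − π(·|s)⟩
= (1−γ)(L(π') − L(π))` where `ν^{π'}` is the stationary state distribution of `π'`
and `L(μ) = E_{s∼ν^{π'}} V^μ(s)`. -/
theorem stmt_10 {S A : Type*} [Fintype S] [Fintype A]
    (γ : ℝ) (hγ0 : 0 ≤ γ) (hγ1 : γ < 1)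
    (r : S → A → ℝ)
    (P : S → A → S → ℝ) (hPnonneg : ∀ s a s', 0 ≤ P s a s')
    (hPsum : ∀ s a, ∑ s', P s a s' = 1)
    (π π' : S → A → ℝ)
    (hπ : ∀ s, (∀ a, 0 ≤ π s a) ∧ ∑ a, π s a = 1)
    (hπ' : ∀ s, (∀ a, 0 ≤ π' s a) ∧ ∑ a, π' s a = 1)
    -- value and Q functions of π (with the (1−γ)-scaled reward convention)
    (V : S → ℝ) (Q : S → A → ℝ) (hV : ∀ s : S, V s = ∑ a, π s a * Q s a)
    (hQ : ∀ (s : S) (a : A), Q s a = (1 - γ) * r s a + γ * ∑ s', P s a s' * V s')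
    -- value and Q functions of π'
    (V' : S → ℝ) (Q' : S → A → ℝ) (hV' : ∀ s : S, V' s = ∑ a, π' s a * Q' s a)
    (hQ' : ∀ (s : S) (a : A), Q' s a = (1 - γ) * r s a + γ * ∑ s', P s a s' * V' s')
    -- stationary state distribution of π'
    (ν : S → ℝ) (hνnonneg : ∀ s, 0 ≤ ν s) (hνsum : ∑ s, ν s = 1)
    (hstat : ∀ s' : S, ν s' = ∑ s, ∑ a, ν s * π' s a * P s a s') :
    ∑ s, ν s * ∑ a, Q s a * (π' s a - π s a)
      = (1 - γ) * ((∑ s, ν s * V' s) - ∑ s, ν s * V s) :=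
  stmt_10_general γ r P π π' V Q hV hQ V' Q' hV' hQ' ν hstat
end

section
/- Let f_β(x) = (1/√m) ∑_{j=1}^m u_j max(β_j^T x, 0) be a two-layer ReLU network with fixed outer weights u_j ∈ {−1, +1} and let f⁰_β(x) = (1/√m) ∑_{j=1}^m u_j 1{β_j(0)^T x > 0} β_j^T x be its linearization at initialization β(0). If ‖x‖₂ ≤ 1, then |f⁰_β(x) − f_β(x)| ≤ (1/√m) ∑_{j=1}^m 1{|β_j(0)^T x| ≤ ‖β_j − β_j(0)‖₂} · ‖β_j − β_j(0)‖₂. -/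
open scoped RealInnerProductSpace

/-!
Each neuron contributes `u j (1{a > 0} b - max b 0)` with `a = ⟪β₀ j, x⟫` and `b = ⟪β j, x⟫`.
This vanishes unless `a` and `b` lie on different sides of `0`, and then both `|a|` and `|b|`
are at most `|b - a| ≤ ‖β j - β₀ j‖ ‖x‖ ≤ ‖β j - β₀ j‖`.
-/

lemma abs_ite_pos_sub_max_zero_le {a b δ : ℝ} (h : |b - a| ≤ δ) :
    |(if 0 < a then b else 0) - max b 0| ≤ if |a| ≤ δ then δ else 0 := by
  have hδ : 0 ≤ δ := (abs_nonneg _).trans h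
  have hba := abs_le.mp h
  have hrhs : 0 ≤ if |a| ≤ δ then δ else 0 := by split_ifs <;> simp [hδ]
  by_cases ha : 0 < a <;> by_cases hb : 0 < b
  · simpa [ha, hb.le] using hrhs
  · have hcross : |a| ≤ δ := by rw [abs_of_pos ha]; linarith
    rw [if_pos ha, max_eq_right (not_lt.mp hb), if_pos hcross, sub_zero, abs_le]
    constructor <;> linarith
  · have hcross : |a| ≤ δ := by rw [abs_of_nonpos (not_lt.mp ha)]; linarith
    rw [if_neg ha, max_eq_left hb.le, if_pos hcross, zero_sub, abs_neg, abs_of_pos hb]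
    linarith
  · simpa [ha, max_eq_right (not_lt.mp hb)] using hrhs

lemma abs_inner_sub_inner_le_norm_sub {E : Type*} [NormedAddCommGroup E]
    [InnerProductSpace ℝ E] {x : E} (hx : ‖x‖ ≤ 1) (a b : E) :
    |⟪b, x⟫ - ⟪a, x⟫| ≤ ‖b - a‖ :=
  calc |⟪b, x⟫ - ⟪a, x⟫| = |⟪b - a, x⟫| := by rw [inner_sub_left]
    _ ≤ ‖b - a‖ * ‖x‖ := abs_real_inner_le_norm _ _
    _ ≤ ‖b - a‖ := mul_le_of_le_one_right (norm_nonneg _) hx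

theorem stmt_11_general (d m : ℕ)
    (u : Fin m → ℝ) (hu : ∀ j, u j = 1 ∨ u j = -1)
    (β β₀ : Fin m → EuclideanSpace ℝ (Fin d))
    (x : EuclideanSpace ℝ (Fin d)) (hx : ‖x‖ ≤ 1) :
    |(1 / Real.sqrt m) * ∑ j, u j * (if (0:ℝ) < ⟪β₀ j, x⟫ then ⟪β j, x⟫ else 0)
        - (1 / Real.sqrt m) * ∑ j, u j * max ⟪β j, x⟫ 0|
      ≤ (1 / Real.sqrt m) *
          ∑ j, (if |⟪β₀ j, x⟫| ≤ ‖β j - β₀ j‖ then ‖β j - β₀ j‖ else 0) := by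
  rw [← mul_sub, abs_mul, abs_of_nonneg (by positivity), ← Finset.sum_sub_distrib]
  gcongr
  refine (Finset.abs_sum_le_sum_abs _ _).trans (Finset.sum_le_sum fun j _ => ?_)
  have hu_abs : |u j| = 1 := by rcases hu j with h | h <;> simp [h]
  rw [← mul_sub, abs_mul, hu_abs, one_mul]
  exact abs_ite_pos_sub_max_zero_le (abs_inner_sub_inner_le_norm_sub hx _ _)

/-- The gap between a two-layer ReLU network and its linearization at initialization
is controlled by lattice crossings. -/
theorem stmt_11 (d m : ℕ) (hm : 0 < m)
    (u : Fin m → ℝ) (hu : ∀ j, u j = 1 ∨ u j = -1)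
    (β β₀ : Fin m → EuclideanSpace ℝ (Fin d))
    (x : EuclideanSpace ℝ (Fin d)) (hx : ‖x‖ ≤ 1) :
    |(1 / Real.sqrt m) * ∑ j, u j * (if (0:ℝ) < ⟪β₀ j, x⟫ then ⟪β j, x⟫ else 0)
        - (1 / Real.sqrt m) * ∑ j, u j * max ⟪β j, x⟫ 0|
      ≤ (1 / Real.sqrt m) *
          ∑ j, (if |⟪β₀ j, x⟫| ≤ ‖β j - β₀ j‖ then ‖β j - β₀ j‖ else 0) :=
  stmt_11_general d m u hu β β₀ x hx
end
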